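/- Assume the p=3 parasupersymmetry algebra, and define the hermitian parasupercharges Q₁ = (Q† + Q)/(2√3) and Q₂ = (Q† − Q)/(2√3·i). Then 2(Q₁⁴ − Q₂⁴) = (Q₁² − Q₂²)H. -/
import Mathlib


open ContinuousLinearMap

/-- The hermitian parasupercharge `Q₁ = (Q† + Q)/(2√3)`. -/
noncomputable def hermQ1 {𝓗 : Type*} [NormedAddCommGroup 𝓗] [InnerProductSpace ℂ 𝓗]
    [CompleteSpace 𝓗] (Q : 𝓗 →L[ℂ] 𝓗) : 𝓗 →L[ℂ] 𝓗 :=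
  ((2 * Real.sqrt 3 : ℝ) : ℂ)⁻¹ • (adjoint Q + Q)

/-- The hermitian parasupercharge `Q₂ = (Q† − Q)/(2√3·i)`. -/
noncomputable def hermQ2 {𝓗 : Type*} [NormedAddCommGroup 𝓗] [InnerProductSpace ℂ 𝓗]
    [CompleteSpace 𝓗] (Q : 𝓗 →L[ℂ] 𝓗) : 𝓗 →L[ℂ] 𝓗 :=
  (((2 * Real.sqrt 3 : ℝ) : ℂ) * Complex.I)⁻¹ • (adjoint Q - Q)

/-- Assuming the p=3 parasupersymmetry algebra,
`2(Q₁⁴ − Q₂⁴) = (Q₁² − Q₂²)H`. -/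
theorem stmt10 {𝓗 : Type*} [NormedAddCommGroup 𝓗] [InnerProductSpace ℂ 𝓗] [CompleteSpace 𝓗]
    (Q H : 𝓗 →L[ℂ] 𝓗) (hH : IsSelfAdjoint H)
    (hQH : Q * H = H * Q) (hQdH : adjoint Q * H = H * adjoint Q)
    (hii : Q ^ 3 * adjoint Q + Q ^ 2 * adjoint Q * Q + Q * adjoint Q * Q ^ 2
      + adjoint Q * Q ^ 3 = 6 * (Q ^ 2 * H))
    (hiii : Q * (adjoint Q) ^ 2 * Q = adjoint Q * Q ^ 2 * adjoint Q)
    (hiv : (adjoint Q) ^ 3 * Q + (adjoint Q) ^ 2 * Q * adjoint Q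
      + adjoint Q * Q * (adjoint Q) ^ 2 + Q * (adjoint Q) ^ 3 = 6 * ((adjoint Q) ^ 2 * H))
    (hQ4 : Q ^ 4 = 0) (hQd4 : (adjoint Q) ^ 4 = 0) :
    2 * ((hermQ1 Q) ^ 4 - (hermQ2 Q) ^ 4) = ((hermQ1 Q) ^ 2 - (hermQ2 Q) ^ 2) * H := by
  simp only [hermQ1, hermQ2]
  set A := adjoint Q with hA
  have h3 : ((Real.sqrt 3 : ℝ) : ℂ) ^ 2 = 3 := by
    rw [← Complex.ofReal_pow, Real.sq_sqrt (by norm_num : (0:ℝ) ≤ 3)]; norm_num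
  have ha2 : (((2 * Real.sqrt 3 : ℝ) : ℂ)) ^ 2 = 12 := by
    push_cast; rw [mul_pow, h3]; norm_num
  have hb2 : ((((2 * Real.sqrt 3 : ℝ) : ℂ) * Complex.I)) ^ 2 = -12 := by
    rw [mul_pow, ha2, Complex.I_sq]; ring
  have e1 : ((((2 * Real.sqrt 3 : ℝ) : ℂ))⁻¹) ^ 2 = (12:ℂ)⁻¹ := by
    rw [inv_pow, ha2]
  have e2 : (((((2 * Real.sqrt 3 : ℝ) : ℂ) * Complex.I))⁻¹) ^ 2 = -(12:ℂ)⁻¹ := by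
    rw [inv_pow, hb2]; norm_num
  have e3 : ((((2 * Real.sqrt 3 : ℝ) : ℂ))⁻¹) ^ 4 = (144:ℂ)⁻¹ := by
    rw [show (4:ℕ) = 2*2 from rfl, pow_mul, e1]; norm_num
  have e4 : (((((2 * Real.sqrt 3 : ℝ) : ℂ) * Complex.I))⁻¹) ^ 4 = (144:ℂ)⁻¹ := by
    rw [show (4:ℕ) = 2*2 from rfl, pow_mul, e2]; norm_num
  rw [smul_pow, smul_pow, smul_pow, smul_pow, e1, e2, e3, e4]
  have key : (A+Q)^4 - (A-Q)^4 = (12:ℂ) • ((A^2+Q^2) * H) := by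
    have h : (A+Q)^4 - (A-Q)^4 =
        2*(Q^3*A + Q^2*A*Q + Q*A*Q^2 + A*Q^3) + 2*(A^3*Q + A^2*Q*A + A*Q*A^2 + Q*A^3) := by
      noncomm_ring
    rw [h, hii, hiv, Algebra.smul_def]
    simp only [map_ofNat]
    noncomm_ring
  have key2 : (A+Q)^2 + (A-Q)^2 = (2:ℂ) • (A^2+Q^2) := by
    rw [Algebra.smul_def, map_ofNat]; noncomm_ring
  rw [two_mul, ← two_smul ℂ, ← smul_sub, key, neg_smul, sub_neg_eq_add,
    ← smul_add, key2, smul_smul, smul_smul, smul_smul, smul_mul_assoc]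
  norm_num
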